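/- For every n ∈ ℤ_{≥1}, t > 0, strictly increasing x = (x_1 < … < x_n) ∈ ℝ^n and m = (m_1, …, m_n) ∈ ℤ_{≥1}^n, one has γ1(t,x,m) = γ2(t,x,m). -/

import Mathlib

open Finset

/-- ℕ interval identification. -/
lemma Ioc_zero_eq_Icc_one (q : ℕ) : Finset.Ioc 0 q = Finset.Icc 1 q := by
  ext k; simp; omega

/-- reindex a sum over Ioc p (p+mm) to Icc 1 mm -/
lemma sum_Ioc_reindex (p mm : ℕ) (f : ℕ → ℝ) :
    ∑ k ∈ Finset.Ioc p (p + mm), f k = ∑ r ∈ Finset.Icc 1 mm, f (p + r) := by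
  rw [← Ioc_zero_eq_Icc_one]
  have : Finset.Ioc p (p + mm) = (Finset.Ioc 0 mm).map (addLeftEmbedding p) := by
    rw [Finset.map_add_left_Ioc]; simp
  rw [this, Finset.sum_map]
  simp [addLeftEmbedding]

lemma sum_Icc_cast (mm : ℕ) : ∑ r ∈ Finset.Icc 1 mm, (r : ℝ) = mm * (mm + 1) / 2 := by
  induction mm with
  | zero => simp
  | succ k ih =>
    rw [Finset.sum_Icc_succ_top (by omega)]
    push_cast
    rw [ih]; ring

lemma sum_Icc_cast_sq (mm : ℕ) :
    ∑ r ∈ Finset.Icc 1 mm, (r : ℝ) ^ 2 = mm * (mm + 1) * (2 * mm + 1) / 6 := by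
  induction mm with
  | zero => simp
  | succ k ih =>
    rw [Finset.sum_Icc_succ_top (by omega)]
    push_cast
    rw [ih]; ring

lemma sum_d (mm : ℕ) : ∑ r ∈ Finset.Icc 1 mm, (((mm : ℝ) + 1) / 2 - r) = 0 := by
  rw [Finset.sum_sub_distrib, Finset.sum_const, sum_Icc_cast, Nat.card_Icc]
  simp only [Nat.add_sub_cancel, nsmul_eq_mul]
  ring

lemma sum_d_sq (mm : ℕ) :
    ∑ r ∈ Finset.Icc 1 mm, (((mm : ℝ) + 1) / 2 - r) ^ 2 = ((mm : ℝ) ^ 3 - mm) / 12 := by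
  have h : ∀ r : ℕ, (((mm : ℝ) + 1) / 2 - r) ^ 2
      = (((mm : ℝ) + 1) / 2) ^ 2 - ((mm : ℝ) + 1) * r + r ^ 2 := by intro r; ring
  rw [Finset.sum_congr rfl fun r _ => h r]
  rw [Finset.sum_add_distrib, Finset.sum_sub_distrib, Finset.sum_const, ← Finset.mul_sum,
    sum_Icc_cast, sum_Icc_cast_sq, Nat.card_Icc]
  simp only [Nat.add_sub_cancel, nsmul_eq_mul]
  ring

/-- chain of gaps ≥ 1 -/
lemma chain_ge (a : ℕ → ℝ) (p q : ℕ)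
    (hgap : ∀ k, p ≤ k → k + 1 ≤ q → a k - a (k + 1) ≥ 1) :
    ∀ k l, p ≤ k → k ≤ l → l ≤ q → a l + ((l - k : ℕ) : ℝ) ≤ a k := by
  intro k l hpk hkl
  induction l, hkl using Nat.le_induction with
  | base => simp
  | succ l hkl ih =>
    intro hlq
    have h1 := hgap l (le_trans hpk hkl) hlq
    have h2 := ih (by omega)
    have h3 : ((l + 1 - k : ℕ) : ℝ) = ((l - k : ℕ) : ℝ) + 1 := by
      rw [Nat.cast_sub (by omega), Nat.cast_sub (by omega)]; push_cast; ring
    rw [h3]; linarith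

/-- step-antitone implies antitone on an interval -/
lemma anti_of_step (e : ℕ → ℝ) (q : ℕ)
    (h : ∀ r, 1 ≤ r → r + 1 ≤ q → e (r + 1) ≤ e r) :
    ∀ k l, 1 ≤ k → k ≤ l → l ≤ q → e l ≤ e k := by
  intro k l hk hkl
  induction l, hkl using Nat.le_induction with
  | base => intro _; exact le_refl _
  | succ l hkl ih =>
    intro hlq
    have := h l (le_trans hk hkl) hlq
    have := ih (by omega)
    linarith

/-- exact block value for the arithmetic-progression choice -/
lemma block_eq (t x b : ℝ) (mm : ℕ) (g : ℕ → ℝ)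
    (hg : ∀ r ∈ Finset.Icc 1 mm, g r = b + (((mm : ℝ) + 1) / 2 - r)) :
    ∑ r ∈ Finset.Icc 1 mm, (t / 2 * g r ^ 2 + x * g r)
      = (mm : ℝ) * t / 2 * b ^ 2 + ((mm : ℝ) ^ 3 - mm) * t / 24 + mm * x * b := by
  have h1 : ∑ r ∈ Finset.Icc 1 mm, (t / 2 * g r ^ 2 + x * g r)
      = ∑ r ∈ Finset.Icc 1 mm, ((t / 2 * b ^ 2 + x * b)
          + (t * b + x) * (((mm : ℝ) + 1) / 2 - r)
          + t / 2 * (((mm : ℝ) + 1) / 2 - r) ^ 2) := by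
    refine Finset.sum_congr rfl fun r hr => ?_
    rw [hg r hr]; ring
  rw [h1, Finset.sum_add_distrib, Finset.sum_add_distrib, Finset.sum_const,
    ← Finset.mul_sum, ← Finset.mul_sum, sum_d, sum_d_sq, Nat.card_Icc]
  simp only [Nat.add_sub_cancel, nsmul_eq_mul]
  ring

/-- block lower bound (Jensen + Chebyshev) -/
lemma block_lb (t x b : ℝ) (ht : 0 < t) (mm : ℕ) (hmm : 1 ≤ mm) (g : ℕ → ℝ)
    (hgap : ∀ r, 1 ≤ r → r + 1 ≤ mm → g r - g (r + 1) ≥ 1)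
    (hb : (mm : ℝ) * b = ∑ r ∈ Finset.Icc 1 mm, g r) :
    (mm : ℝ) * t / 2 * b ^ 2 + ((mm : ℝ) ^ 3 - mm) * t / 24 + mm * x * b
      ≤ ∑ r ∈ Finset.Icc 1 mm, (t / 2 * g r ^ 2 + x * g r) := by
  set c : ℝ := ((mm : ℝ) + 1) / 2 with hc
  set e : ℕ → ℝ := fun r => g r - b - (c - r) with he
  have hmmR : (0 : ℝ) < mm := by exact_mod_cast hmm
  have hsum_e : ∑ r ∈ Finset.Icc 1 mm, e r = 0 := by
    simp only [he]
    rw [Finset.sum_sub_distrib, Finset.sum_sub_distrib, Finset.sum_const, Nat.card_Icc]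
    rw [hc, sum_d]
    simp only [Nat.add_sub_cancel, nsmul_eq_mul]
    rw [← hb]; ring
  have hstep : ∀ r, 1 ≤ r → r + 1 ≤ mm → e (r + 1) ≤ e r := by
    intro r h1 h2
    have := hgap r h1 h2
    simp only [he]
    push_cast
    linarith
  have hanti := anti_of_step e mm hstep
  have hmono : MonovaryOn (fun r : ℕ => c - (r : ℝ)) e (Finset.Icc 1 mm) := by
    intro i hi j hj hlt
    simp only [Finset.mem_Icc, Finset.coe_Icc, Set.mem_Icc] at hi hj
    by_cases hij : i ≤ j
    · exact absurd (hanti i j hi.1 hij hj.2) (not_le.mpr hlt)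
    · have : (j : ℝ) ≤ i := by exact_mod_cast le_of_lt (not_le.mp hij)
      simp only []
      linarith
  have cheb := hmono.sum_mul_sum_le_card_mul_sum
  rw [hc, sum_d, hsum_e] at cheb
  have hde : (0 : ℝ) ≤ ∑ r ∈ Finset.Icc 1 mm, (c - (r : ℝ)) * e r := by
    have hcard : ((Finset.Icc 1 mm).card : ℝ) = mm := by
      rw [Nat.card_Icc]; simp
    rw [hcard] at cheb
    simp only [zero_mul] at cheb
    nlinarith
  have hesq : (0 : ℝ) ≤ ∑ r ∈ Finset.Icc 1 mm, (e r) ^ 2 :=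
    Finset.sum_nonneg fun r _ => sq_nonneg _
  have hpoint : ∀ r ∈ Finset.Icc 1 mm, t / 2 * g r ^ 2 + x * g r
      = (t / 2 * b ^ 2 + x * b) + (t * b + x) * (c - r) + (t * b + x) * e r
        + t / 2 * (c - r) ^ 2 + t / 2 * (e r) ^ 2 + t * ((c - r) * e r) := by
    intro r _
    simp only [he]
    ring
  rw [Finset.sum_congr rfl hpoint, Finset.sum_add_distrib, Finset.sum_add_distrib,
    Finset.sum_add_distrib, Finset.sum_add_distrib, Finset.sum_add_distrib,
    Finset.sum_const, ← Finset.mul_sum, ← Finset.mul_sum, ← Finset.mul_sum,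
    ← Finset.mul_sum, ← Finset.mul_sum, Nat.card_Icc]
  simp only [Nat.add_sub_cancel, nsmul_eq_mul]
  rw [hc] at hde ⊢
  rw [sum_d, sum_d_sq, hsum_e]
  nlinarith [mul_nonneg ht.le hesq, mul_nonneg ht.le hde]

lemma sum_ge_aux (mm : ℕ) (g : ℕ → ℝ) (v : ℝ)
    (h : ∀ r ∈ Finset.Icc 1 mm, v + ((mm : ℝ) - r) ≤ g r) :
    (mm : ℝ) * v + mm * (mm - 1) / 2 ≤ ∑ r ∈ Finset.Icc 1 mm, g r := by
  have h1 : ∑ r ∈ Finset.Icc 1 mm, (v + ((mm : ℝ) - r)) = (mm : ℝ) * v + mm * (mm - 1) / 2 := by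
    rw [Finset.sum_add_distrib, Finset.sum_const, Finset.sum_sub_distrib, Finset.sum_const,
      sum_Icc_cast, Nat.card_Icc]
    simp only [Nat.add_sub_cancel, nsmul_eq_mul]
    ring
  rw [← h1]
  exact Finset.sum_le_sum h

lemma sum_le_aux (mm : ℕ) (g : ℕ → ℝ) (v : ℝ)
    (h : ∀ r ∈ Finset.Icc 1 mm, g r ≤ v - r) :
    ∑ r ∈ Finset.Icc 1 mm, g r ≤ (mm : ℝ) * v - mm * (mm + 1) / 2 := by
  have h1 : ∑ r ∈ Finset.Icc 1 mm, (v - (r : ℝ)) = (mm : ℝ) * v - mm * (mm + 1) / 2 := by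
    rw [Finset.sum_sub_distrib, Finset.sum_const, sum_Icc_cast, Nat.card_Icc]
    simp only [Nat.add_sub_cancel, nsmul_eq_mul]
    try ring
  rw [← h1]
  exact Finset.sum_le_sum h

lemma sum_blocks (S : ℕ → ℕ) (hS0 : S 0 = 0) (hmono : ∀ j, S j ≤ S (j + 1)) (f : ℕ → ℝ) :
    ∀ n : ℕ, ∑ j ∈ Finset.Icc 1 n, ∑ k ∈ Finset.Ioc (S (j - 1)) (S j), f k
      = ∑ k ∈ Finset.Ioc 0 (S n), f k := by
  intro n
  induction n with
  | zero => simp [hS0]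
  | succ p ih =>
    rw [Finset.sum_Icc_succ_top (by omega : 1 ≤ p + 1), ih]
    simp only [Nat.add_sub_cancel]
    have hdisj : Disjoint (Finset.Ioc 0 (S p)) (Finset.Ioc (S p) (S (p + 1))) := by
      rw [Finset.disjoint_left]
      intro k hk hk'
      simp only [Finset.mem_Ioc] at hk hk'
      omega
    rw [← Finset.sum_union hdisj, Finset.Ioc_union_Ioc_eq_Ioc (Nat.zero_le _) (hmono p)]

/-- γ1(t,x,m) = γ2(t,x,m). -/
theorem gamma1_eq_gamma2
    (n : ℕ) (hn : 1 ≤ n) (t : ℝ) (ht : 0 < t)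
    (x : ℕ → ℝ) (hx : ∀ i, 1 ≤ i → i < n → x i < x (i + 1))
    (m : ℕ → ℕ) (hm : ∀ i, 1 ≤ i → i ≤ n → 1 ≤ m i)
    (M : ℕ) (hM : M = ∑ i ∈ Finset.Icc 1 n, m i)
    (u : ℕ → ℝ)
    (hu : ∀ j, 1 ≤ j → j ≤ n → ∀ k, (∑ i ∈ Finset.Icc 1 (j - 1), m i) < k →
      k ≤ ∑ i ∈ Finset.Icc 1 j, m i → u k = x j) :
    sInf {c : ℝ | ∃ a : ℕ → ℝ,
        (∀ i, 1 ≤ i → i + 1 ≤ M → a i - a (i + 1) ≥ 1) ∧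
        c = ∑ i ∈ Finset.Icc 1 M, (t / 2 * a i ^ 2 + u i * a i)}
    = sInf {c : ℝ | ∃ b : ℕ → ℝ,
        (∀ i, 1 ≤ i → i + 1 ≤ n → b i - b (i + 1) ≥ ((m i : ℝ) + (m (i + 1) : ℝ)) / 2) ∧
        c = ∑ i ∈ Finset.Icc 1 n, ((m i : ℝ) * t / 2 * (b i + x i / t) ^ 2
            + ((m i : ℝ) ^ 3 - (m i : ℝ)) * t / 24 - (m i : ℝ) * x i ^ 2 / (2 * t))} := by
  classical
  set Set1 : Set ℝ := {c : ℝ | ∃ a : ℕ → ℝ,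
        (∀ i, 1 ≤ i → i + 1 ≤ M → a i - a (i + 1) ≥ 1) ∧
        c = ∑ i ∈ Finset.Icc 1 M, (t / 2 * a i ^ 2 + u i * a i)} with hSet1
  set Set2 : Set ℝ := {c : ℝ | ∃ b : ℕ → ℝ,
        (∀ i, 1 ≤ i → i + 1 ≤ n → b i - b (i + 1) ≥ ((m i : ℝ) + (m (i + 1) : ℝ)) / 2) ∧
        c = ∑ i ∈ Finset.Icc 1 n, ((m i : ℝ) * t / 2 * (b i + x i / t) ^ 2
            + ((m i : ℝ) ^ 3 - (m i : ℝ)) * t / 24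
            - (m i : ℝ) * x i ^ 2 / (2 * t))} with hSet2
  -- partial sums
  set S : ℕ → ℕ := fun j => ∑ i ∈ Finset.Icc 1 j, m i with hS
  have hS0 : S 0 = 0 := by simp [hS]
  have hSstep : ∀ j, S (j + 1) = S j + m (j + 1) := by
    intro j
    simp only [hS]
    rw [Finset.sum_Icc_succ_top (by omega : 1 ≤ j + 1)]
  have hSmono : ∀ j, S j ≤ S (j + 1) := fun j => by rw [hSstep]; omega
  have hSmono' : ∀ i j, i ≤ j → S i ≤ S j := fun i j h =>
    monotone_nat_of_le_succ hSmono h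
  have hSsub : ∀ j, 1 ≤ j → S j = S (j - 1) + m j := by
    intro j hj
    have h := hSstep (j - 1)
    rwa [Nat.sub_add_cancel hj] at h
  have hMS : M = S n := hM
  have hmpos : ∀ j, 1 ≤ j → j ≤ n → (0 : ℝ) < (m j : ℝ) := by
    intro j h1 h2; exact_mod_cast hm j h1 h2
  have hS1 : 1 ≤ S 1 := by
    rw [hSsub 1 le_rfl]; simp [hS0]; exact hm 1 le_rfl hn
  have hM1 : 1 ≤ M := by
    rw [hMS]; exact le_trans hS1 (hSmono' 1 n hn)
  -- locating k in a block
  have hloc : ∀ k, 1 ≤ k → k ≤ M → ∃ j, 1 ≤ j ∧ j ≤ n ∧ S (j - 1) < k ∧ k ≤ S j := by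
    intro k hk1 hk2
    have hex : ∃ j, k ≤ S j := ⟨n, by rw [← hMS]; exact hk2⟩
    refine ⟨Nat.find hex, ?_, ?_, ?_, Nat.find_spec hex⟩
    · by_contra h
      have h0 : Nat.find hex = 0 := by omega
      have := Nat.find_spec hex
      rw [h0, hS0] at this; omega
    · exact Nat.find_le (by rw [← hMS]; exact hk2)
    · have h1 : 1 ≤ Nat.find hex := by
        by_contra h
        have h0 : Nat.find hex = 0 := by omega
        have := Nat.find_spec hex
        rw [h0, hS0] at this; omega
      have := Nat.find_min hex (show Nat.find hex - 1 < Nat.find hex by omega)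
      omega
  -- uniqueness of block
  have huniq : ∀ k j j', (1 ≤ j ∧ j ≤ n ∧ S (j - 1) < k ∧ k ≤ S j) →
      (1 ≤ j' ∧ j' ≤ n ∧ S (j' - 1) < k ∧ k ≤ S j') → j = j' := by
    intro k j j' h h'
    rcases Nat.lt_trichotomy j j' with hlt | heq | hgt
    · have := hSmono' j (j' - 1) (by omega); omega
    · exact heq
    · have := hSmono' j' (j - 1) (by omega); omega
  -- u on a block
  have hu' : ∀ j, 1 ≤ j → j ≤ n → ∀ k ∈ Finset.Ioc (S (j - 1)) (S j), u k = x j := by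
    intro j h1 h2 k hk
    rw [Finset.mem_Ioc] at hk
    exact hu j h1 h2 k hk.1 hk.2
  -- γ2 integrand simplification
  have hγ2 : ∀ (mj xj bj : ℝ), mj * t / 2 * (bj + xj / t) ^ 2 + (mj ^ 3 - mj) * t / 24
      - mj * xj ^ 2 / (2 * t)
      = mj * t / 2 * bj ^ 2 + (mj ^ 3 - mj) * t / 24 + mj * xj * bj := by
    intro mj xj bj
    field_simp
    ring
  -- value rewriting for any a
  have hval : ∀ a : ℕ → ℝ,
      ∑ i ∈ Finset.Icc 1 M, (t / 2 * a i ^ 2 + u i * a i)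
      = ∑ j ∈ Finset.Icc 1 n, ∑ k ∈ Finset.Ioc (S (j - 1)) (S j),
          (t / 2 * a k ^ 2 + x j * a k) := by
    intro a
    rw [← Ioc_zero_eq_Icc_one, hMS,
      ← sum_blocks S hS0 hSmono (fun k => t / 2 * a k ^ 2 + u k * a k) n]
    refine Finset.sum_congr rfl fun j hj => ?_
    rw [Finset.mem_Icc] at hj
    refine Finset.sum_congr rfl fun k hk => ?_
    rw [hu' j hj.1 hj.2 k hk]
  -- nonemptiness of Set1
  have ne1 : Set1.Nonempty := by
    refine ⟨∑ i ∈ Finset.Icc 1 M, (t / 2 * (-(i : ℝ)) ^ 2 + u i * (-(i : ℝ))),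
      fun i => -(i : ℝ), fun i _ _ => ?_, rfl⟩
    push_cast
    linarith
  -- m j ≤ M
  have hmleM : ∀ j, 1 ≤ j → j ≤ n → m j ≤ M := by
    intro j h1 h2
    rw [hM]
    exact Finset.single_le_sum (fun i _ => Nat.zero_le _) (Finset.mem_Icc.mpr ⟨h1, h2⟩)
  -- nonemptiness of Set2
  have ne2 : Set2.Nonempty := by
    refine ⟨_, fun j => (M : ℝ) * ((n : ℝ) - (j : ℝ)), fun i hi hi1 => ?_, rfl⟩
    have h1 : (m i : ℝ) ≤ M := by exact_mod_cast hmleM i hi (by omega)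
    have h2 : (m (i + 1) : ℝ) ≤ M := by exact_mod_cast hmleM (i + 1) (by omega) hi1
    have : (M : ℝ) * ((n : ℝ) - i) - M * ((n : ℝ) - (↑(i + 1))) = M := by
      push_cast; ring
    rw [ge_iff_le, this]
    linarith
  -- bounded below
  have bdd1 : BddBelow Set1 := by
    refine ⟨∑ i ∈ Finset.Icc 1 M, (-(u i) ^ 2 / (2 * t)), fun c hc => ?_⟩
    obtain ⟨a, _, rfl⟩ := hc
    refine Finset.sum_le_sum fun i _ => ?_
    have h1 : (0 : ℝ) ≤ (t * a i + u i) ^ 2 / (2 * t) :=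
      div_nonneg (sq_nonneg _) (by linarith)
    have h2 : (t * a i + u i) ^ 2 / (2 * t)
        = t / 2 * a i ^ 2 + u i * a i + u i ^ 2 / (2 * t) := by
      field_simp; ring
    rw [h2] at h1
    have h3 : -u i ^ 2 / (2 * t) = -(u i ^ 2 / (2 * t)) := by ring
    rw [h3]
    linarith
  have bdd2 : BddBelow Set2 := by
    refine ⟨∑ j ∈ Finset.Icc 1 n, (((m j : ℝ) ^ 3 - (m j : ℝ)) * t / 24
      - (m j : ℝ) * x j ^ 2 / (2 * t)), fun c hc => ?_⟩
    obtain ⟨b, _, rfl⟩ := hc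
    refine Finset.sum_le_sum fun j _ => ?_
    have h1 : (0 : ℝ) ≤ (m j : ℝ) * t / 2 * (b j + x j / t) ^ 2 := by positivity
    linarith
  -- Direction 1: Set2 ⊆ Set1
  have hsub : Set2 ⊆ Set1 := by
    rintro c ⟨b, hbcon, rfl⟩
    set a : ℕ → ℝ := fun k =>
      if h : ∃ j, 1 ≤ j ∧ j ≤ n ∧ S (j - 1) < k ∧ k ≤ S j then
        b (Classical.choose h) + ((m (Classical.choose h) : ℝ) + 1) / 2
          - ((k : ℝ) - ((S (Classical.choose h - 1) : ℕ) : ℝ))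
      else 0 with ha
    have ha_eval : ∀ j, 1 ≤ j → j ≤ n → ∀ k, S (j - 1) < k → k ≤ S j →
        a k = b j + ((m j : ℝ) + 1) / 2 - ((k : ℝ) - ((S (j - 1) : ℕ) : ℝ)) := by
      intro j h1 h2 k hk1 hk2
      have hex : ∃ j', 1 ≤ j' ∧ j' ≤ n ∧ S (j' - 1) < k ∧ k ≤ S j' := ⟨j, h1, h2, hk1, hk2⟩
      simp only [ha]
      rw [dif_pos hex]
      have heq := huniq k (Classical.choose hex) j (Classical.choose_spec hex) ⟨h1, h2, hk1, hk2⟩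
      rw [heq]
    have hacon : ∀ i, 1 ≤ i → i + 1 ≤ M → a i - a (i + 1) ≥ 1 := by
      intro i hi hiM
      obtain ⟨j, hj1, hjn, hjk1, hjk2⟩ := hloc i hi (by omega)
      by_cases hcase : i < S j
      · have e1 := ha_eval j hj1 hjn i hjk1 hjk2
        have e2 := ha_eval j hj1 hjn (i + 1) (by omega) hcase
        rw [e1, e2]
        push_cast
        linarith
      · have hiSj : i = S j := by omega
        have hjn' : j < n := by
          by_contra h
          have hj_eq : j = n := by omega
          rw [hj_eq, ← hMS] at hiSj
          omega
        have hstep := hSstep j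
        have hm1 : 1 ≤ m (j + 1) := hm (j + 1) (by omega) hjn'
        have e1 := ha_eval j hj1 hjn i hjk1 hjk2
        have e2 := ha_eval (j + 1) (by omega) hjn' (i + 1)
          (by simp only [Nat.add_sub_cancel]; omega) (by omega)
        rw [e1, e2]
        simp only [Nat.add_sub_cancel] at *
        have hcast : (S j : ℝ) = ((S (j - 1) : ℕ) : ℝ) + (m j : ℝ) := by
          exact_mod_cast hSsub j hj1
        have hbc := hbcon j hj1 (by omega)
        have hiR : (i : ℝ) = ((S j : ℕ) : ℝ) := by exact_mod_cast hiSj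
        push_cast
        linarith
    refine ⟨a, hacon, ?_⟩
    rw [hval a]
    refine Finset.sum_congr rfl fun j hj => ?_
    rw [Finset.mem_Icc] at hj
    rw [hγ2 (m j) (x j) (b j), hSsub j hj.1,
      sum_Ioc_reindex (S (j - 1)) (m j) (fun k => t / 2 * a k ^ 2 + x j * a k)]
    refine (block_eq t (x j) (b j) (m j) (fun r => a (S (j - 1) + r)) ?_).symm
    intro r hr
    rw [Finset.mem_Icc] at hr
    have hk1 : S (j - 1) < S (j - 1) + r := by omega
    have hk2 : S (j - 1) + r ≤ S j := by rw [hSsub j hj.1]; omega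
    show a (S (j - 1) + r) = b j + ((↑(m j) + 1) / 2 - ↑r)
    rw [ha_eval j hj.1 hj.2 (S (j - 1) + r) hk1 hk2]
    push_cast
    ring
  -- Direction 2: every element of Set1 dominates an element of Set2
  have hdom : ∀ c ∈ Set1, ∃ c' ∈ Set2, c' ≤ c := by
    rintro c ⟨a, hacon, rfl⟩
    have hch := chain_ge a 1 M hacon
    set bb : ℕ → ℝ := fun j => (∑ k ∈ Finset.Ioc (S (j - 1)) (S j), a k) / (m j) with hbb
    have hbbmul : ∀ j, 1 ≤ j → j ≤ n →
        (m j : ℝ) * bb j = ∑ k ∈ Finset.Ioc (S (j - 1)) (S j), a k := by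
      intro j h1 h2
      simp only [hbb]
      have : (m j : ℝ) ≠ 0 := ne_of_gt (hmpos j h1 h2)
      field_simp
    have hbbcon : ∀ i, 1 ≤ i → i + 1 ≤ n →
        bb i - bb (i + 1) ≥ ((m i : ℝ) + (m (i + 1) : ℝ)) / 2 := by
      intro i hi hin
      have hmi := hm i hi (by omega)
      have hmi1 := hm (i + 1) (by omega) hin
      have hmiR := hmpos i hi (by omega)
      have hmi1R := hmpos (i + 1) (by omega) hin
      have hSiM : S i ≤ M := by rw [hMS]; exact hSmono' i n (by omega)
      have hSi1 : 1 ≤ S i := le_trans hS1 (hSmono' 1 i hi)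
      have hlb : (m i : ℝ) * a (S i) + (m i : ℝ) * ((m i : ℝ) - 1) / 2
          ≤ (m i : ℝ) * bb i := by
        have hsum : ∑ k ∈ Finset.Ioc (S (i - 1)) (S i), a k
            = ∑ r ∈ Finset.Icc 1 (m i), a (S (i - 1) + r) := by
          rw [hSsub i hi, sum_Ioc_reindex]
        rw [hbbmul i hi (by omega), hsum]
        refine sum_ge_aux (m i) (fun r => a (S (i - 1) + r)) (a (S i)) ?_
        intro r hr
        rw [Finset.mem_Icc] at hr
        have h1 : S (i - 1) + r ≤ S i := by rw [hSsub i hi]; omega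
        have h2 := hch (S (i - 1) + r) (S i) (by omega) h1 hSiM
        have h3 : ((S i - (S (i - 1) + r) : ℕ) : ℝ) = (m i : ℝ) - r := by
          have h4 := hSsub i hi
          rw [Nat.cast_sub h1, h4]
          push_cast
          ring
        rw [h3] at h2
        show a (S i) + ((m i : ℝ) - r) ≤ a (S (i - 1) + r)
        linarith
      have hub : (m (i + 1) : ℝ) * bb (i + 1) ≤ (m (i + 1) : ℝ) * a (S i)
          - (m (i + 1) : ℝ) * ((m (i + 1) : ℝ) + 1) / 2 := by
        have e : S (i + 1 - 1) = S i := by simp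
        have e2 : S (i + 1) = S i + m (i + 1) := hSstep i
        rw [hbbmul (i + 1) (by omega) hin, e, e2, sum_Ioc_reindex (S i) (m (i + 1)) a]
        refine sum_le_aux (m (i + 1)) (fun r => a (S i + r)) (a (S i)) ?_
        intro r hr
        rw [Finset.mem_Icc] at hr
        have h1 : S i + r ≤ M := by
          have e3 : S (i + 1) ≤ M := by rw [hMS]; exact hSmono' (i + 1) n hin
          omega
        have h2 := hch (S i) (S i + r) hSi1 (by omega) h1
        have h3 : ((S i + r - S i : ℕ) : ℝ) = (r : ℝ) := by simp
        rw [h3] at h2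
        show a (S i + r) ≤ a (S i) - r
        linarith
      have hlb' : a (S i) + ((m i : ℝ) - 1) / 2 ≤ bb i := by
        have h5 : (m i : ℝ) * (a (S i) + ((m i : ℝ) - 1) / 2) ≤ (m i : ℝ) * bb i := by
          nlinarith
        exact (mul_le_mul_iff_right₀ hmiR).mp h5
      have hub' : bb (i + 1) ≤ a (S i) - ((m (i + 1) : ℝ) + 1) / 2 := by
        have h5 : (m (i + 1) : ℝ) * bb (i + 1)
            ≤ (m (i + 1) : ℝ) * (a (S i) - ((m (i + 1) : ℝ) + 1) / 2) := by
          nlinarith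
        exact (mul_le_mul_iff_right₀ hmi1R).mp h5
      rw [ge_iff_le]
      linarith
    refine ⟨∑ j ∈ Finset.Icc 1 n, ((m j : ℝ) * t / 2 * (bb j + x j / t) ^ 2
        + ((m j : ℝ) ^ 3 - (m j : ℝ)) * t / 24 - (m j : ℝ) * x j ^ 2 / (2 * t)),
      ⟨bb, hbbcon, rfl⟩, ?_⟩
    rw [hval a]
    refine Finset.sum_le_sum fun j hj => ?_
    rw [Finset.mem_Icc] at hj
    rw [hγ2 (m j) (x j) (bb j)]
    have hb' : (m j : ℝ) * bb j = ∑ r ∈ Finset.Icc 1 (m j), a (S (j - 1) + r) := by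
      rw [hbbmul j hj.1 hj.2, hSsub j hj.1, sum_Ioc_reindex]
    have hgap : ∀ r, 1 ≤ r → r + 1 ≤ m j →
        a (S (j - 1) + r) - a (S (j - 1) + (r + 1)) ≥ 1 := by
      intro r h1 h2
      have e4 : S (j - 1) + (r + 1) = S (j - 1) + r + 1 := by omega
      have e5 := hSsub j hj.1
      have e6 : S j ≤ M := by rw [hMS]; exact hSmono' j n hj.2
      rw [e4]
      exact hacon (S (j - 1) + r) (by omega) (by omega)
    have hblk := block_lb t (x j) (bb j) ht (m j) (hm j hj.1 hj.2)
      (fun r => a (S (j - 1) + r)) hgap hb'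
    rw [hSsub j hj.1, sum_Ioc_reindex (S (j - 1)) (m j) (fun k => t / 2 * a k ^ 2 + x j * a k)]
    exact hblk
  apply le_antisymm
  · exact csInf_le_csInf bdd1 ne2 hsub
  · refine le_csInf ne1 fun c hc => ?_
    obtain ⟨c', hc', hle⟩ := hdom c hc
    exact le_trans (csInf_le bdd2 hc') hle
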